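/- Let α > -1, a ≠ b nonnegative reals, and z > 0. Then ∫_0^z j_α(at) j_α(bt) t^{2α+1} dt = z^{2α+2} (a² j_{α+1}(az) j_α(bz) - b² j_α(az) j_{α+1}(bz)) / (2(α+1)(a² - b²)). -/

import Mathlib

/-!
Write `j_α x = ∑ₖ cₖ(α) ((x/2)²)ᵏ` with `cₖ(α) = (-1)ᵏ / (k! (α+1)ₖ)`. Termwise differentiation
gives `j_α' x = -x/(2(α+1)) j_{α+1} x`, and the coefficient identity
`(α+1)(cₖ(α) - cₖ(α+1)) = k cₖ(α+1)` gives `(t^{2α+2} j_{α+1}(ct))' = (2α+2) t^{2α+1} j_α(ct)`.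
By these two rules
`F t = t^{2α+2} (a² j_{α+1}(at) j_α(bt) - b² j_α(at) j_{α+1}(bt)) / (2(α+1)(a²-b²))`
is an antiderivative of the integrand on `(0, z)`, the cross terms in
`t^{2α+3} j_{α+1}(at) j_{α+1}(bt)` cancelling; as `2α + 2 > 0`, `F` is continuous at `0` with
`F 0 = 0`.
-/

/-- The normalized Bessel function `j_α`, given by its power series. -/
noncomputable def besselJ (α : ℝ) (x : ℝ) : ℝ :=
  ∑' k : ℕ, (-1 : ℝ) ^ k * Real.Gamma (α + 1) * (x / 2) ^ (2 * k) /
    ((Nat.factorial k : ℝ) * Real.Gamma ((k : ℝ) + α + 1))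

open Polynomial Nat

theorem Real.Gamma_add_nat_eq_ascPochhammer_mul {s : ℝ} (hs : ∀ n : ℕ, s ≠ -n) (k : ℕ) :
    Real.Gamma (s + k) = (ascPochhammer ℝ k).eval s * Real.Gamma s := by
  induction k with
  | zero => simp
  | succ k ih =>
    have hsk : s + k ≠ 0 := fun h => hs k (by linarith)
    rw [Nat.cast_succ, ← add_assoc, Real.Gamma_add_one hsk, ih, ascPochhammer_succ_eval]
    ring

section Pochhammer

variable {S : Type*} [CommSemiring S] [LinearOrder S] [IsStrictOrderedRing S]

theorem one_le_ascPochhammer_eval {s : S} (hs : 1 ≤ s) (k : ℕ) :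
    1 ≤ (ascPochhammer S k).eval s := by
  induction k with
  | zero => simp
  | succ k ih =>
    rw [ascPochhammer_succ_eval]
    exact one_le_mul_of_one_le_of_one_le ih (le_add_of_le_of_nonneg hs k.cast_nonneg)

theorem min_le_ascPochhammer_eval {s : S} (hs : 0 < s) (k : ℕ) :
    min s 1 ≤ (ascPochhammer S k).eval s := by
  cases k with
  | zero => simp
  | succ k =>
    simp only [ascPochhammer_succ_left, eval_mul, eval_X, eval_comp, eval_add, eval_one]
    calc min s 1 ≤ s := min_le_left _ _
      _ ≤ s * _ := le_mul_of_one_le_right hs.le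
          (one_le_ascPochhammer_eval (le_add_of_nonneg_left hs.le) k)

end Pochhammer

section ExpBoundedPowerSeries

variable {a : ℕ → ℝ} {M : ℝ}

theorem summable_mul_pow_of_abs_le_div_factorial (ha : ∀ k, |a k| ≤ M / k !) (x : ℝ) :
    Summable fun k => a k * x ^ k := by
  refine .of_norm_bounded ((Real.summable_pow_div_factorial |x|).mul_left M) fun k => ?_
  rw [Real.norm_eq_abs, abs_mul, abs_pow]
  calc |a k| * |x| ^ k ≤ M / k ! * |x| ^ k := by gcongr; exact ha k
    _ = M * (|x| ^ k / k !) := by ring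

theorem hasDerivAt_tsum_mul_pow_of_abs_le_div_factorial (ha : ∀ k, |a k| ≤ M / k !) (x : ℝ) :
    HasDerivAt (fun y => ∑' k, a k * y ^ k) (∑' k, a k * (k * x ^ (k - 1))) x := by
  set R := |x| + 1
  have hbound : Summable fun k : ℕ => M / k ! * (k * R ^ (k - 1)) := by
    refine (summable_nat_add_iff 1).mp
      (((Real.summable_pow_div_factorial R).mul_left M).congr fun k => ?_)
    rw [Nat.factorial_succ, Nat.add_sub_cancel]
    push_cast
    field_simp
  have hx : x ∈ Metric.ball (0 : ℝ) R := by simp [R]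
  refine hasDerivAt_tsum_of_isPreconnected hbound Metric.isOpen_ball
    (convex_ball 0 R).isPreconnected (fun k y _ => (hasDerivAt_pow k y).const_mul (a k))
    (fun k y hy => ?_) hx (summable_mul_pow_of_abs_le_div_factorial ha x) hx
  have hy : |y| ≤ R := by simpa using (Metric.mem_ball.1 hy).le
  rw [Real.norm_eq_abs, abs_mul, abs_mul, abs_pow, Nat.abs_cast]
  have hM : 0 ≤ M / k ! := (abs_nonneg _).trans (ha k)
  gcongr
  exact ha k

end ExpBoundedPowerSeries

noncomputable def besselCoeff (α : ℝ) (k : ℕ) : ℝ :=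
  (-1) ^ k / (k ! * (ascPochhammer ℝ k).eval (α + 1))

noncomputable def besselSeries (α u : ℝ) : ℝ :=
  ∑' k, besselCoeff α k * u ^ k

section Bessel

variable {α : ℝ}

theorem besselJ_eq_besselSeries (hα : -1 < α) (x : ℝ) :
    besselJ α x = besselSeries α ((x / 2) ^ 2) := by
  have hs : ∀ n : ℕ, α + 1 ≠ -n := fun n h => by linarith [n.cast_nonneg (α := ℝ)]
  have hΓ : Real.Gamma (α + 1) ≠ 0 := (Real.Gamma_pos_of_pos (by linarith)).ne'
  refine tsum_congr fun k => ?_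
  have hP : 0 < (ascPochhammer ℝ k).eval (α + 1) := ascPochhammer_pos k _ (by linarith)
  rw [show (k : ℝ) + α + 1 = α + 1 + k by ring, Real.Gamma_add_nat_eq_ascPochhammer_mul hs,
    besselCoeff, ← pow_mul]
  field_simp

theorem abs_besselCoeff_le (hα : -1 < α) (k : ℕ) :
    |besselCoeff α k| ≤ (min (α + 1) 1)⁻¹ / k ! := by
  have hm : 0 < min (α + 1) 1 := lt_min (by linarith) one_pos
  have hP := min_le_ascPochhammer_eval (by linarith : 0 < α + 1) k
  have hP₀ := ascPochhammer_pos k (α + 1) (by linarith)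
  rw [besselCoeff, abs_div, abs_pow, abs_neg, abs_one, one_pow, abs_of_pos (by positivity)]
  calc 1 / (k ! * (ascPochhammer ℝ k).eval (α + 1))
      = ((ascPochhammer ℝ k).eval (α + 1))⁻¹ / k ! := by ring
    _ ≤ (min (α + 1) 1)⁻¹ / k ! := by gcongr

theorem besselCoeff_succ_mul (α : ℝ) (k : ℕ) :
    besselCoeff α (k + 1) * (k + 1) = -besselCoeff (α + 1) k / (α + 1) := by
  simp only [besselCoeff, ascPochhammer_succ_left, eval_mul, eval_X, eval_comp, eval_add,
    eval_one, Nat.factorial_succ, Nat.cast_mul, Nat.cast_succ, div_eq_mul_inv, mul_inv, pow_succ]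
  have hk : (k + 1 : ℝ) ≠ 0 := by positivity
  field_simp

theorem besselCoeff_sub_succ (hα : -1 < α) (k : ℕ) :
    (α + 1) * (besselCoeff α k - besselCoeff (α + 1) k) = k * besselCoeff (α + 1) k := by
  have hP := ascPochhammer_pos k (α + 1) (by linarith)
  have hP' := ascPochhammer_pos k (α + 1 + 1) (by linarith)
  have hrec : (α + 1) * (ascPochhammer ℝ k).eval (α + 1 + 1) =
      (ascPochhammer ℝ k).eval (α + 1) * (α + 1 + k) := by
    rw [← ascPochhammer_succ_eval]
    simp [ascPochhammer_succ_left]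
  simp only [besselCoeff]
  field_simp
  linear_combination hrec

theorem summable_besselSeries (hα : -1 < α) (u : ℝ) :
    Summable fun k => besselCoeff α k * u ^ k :=
  summable_mul_pow_of_abs_le_div_factorial (abs_besselCoeff_le hα) u

theorem tsum_besselCoeff_mul_nat_mul_pow_sub_one (hα : -1 < α) (u : ℝ) :
    ∑' k, besselCoeff α k * (k * u ^ (k - 1)) = -besselSeries (α + 1) u / (α + 1) := by
  have hshift : ∀ k : ℕ, besselCoeff α (k + 1) * ((k + 1 : ℕ) * u ^ (k + 1 - 1)) =
      -besselCoeff (α + 1) k / (α + 1) * u ^ k := by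
    intro k
    rw [Nat.add_sub_cancel, Nat.cast_succ, ← mul_assoc, besselCoeff_succ_mul]
  have hsum := ((summable_besselSeries (by linarith : -1 < α + 1) u).div_const (α + 1)).neg
  rw [tsum_eq_zero_add' (by simpa only [hshift, neg_div, neg_mul, div_mul_eq_mul_div] using hsum)]
  simp only [hshift, CharP.cast_eq_zero, zero_mul, mul_zero, zero_add, besselSeries]
  rw [← tsum_neg, ← tsum_div_const]
  congr with k
  ring

theorem hasDerivAt_besselSeries (hα : -1 < α) (u : ℝ) :
    HasDerivAt (besselSeries α) (-besselSeries (α + 1) u / (α + 1)) u := by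
  rw [← tsum_besselCoeff_mul_nat_mul_pow_sub_one hα]
  exact hasDerivAt_tsum_mul_pow_of_abs_le_div_factorial (abs_besselCoeff_le hα) u

theorem besselSeries_sub_succ (hα : -1 < α) (u : ℝ) :
    (α + 1) * (besselSeries α u - besselSeries (α + 1) u) =
      -(u * besselSeries (α + 2) u) / (α + 2) := by
  have hα1 : -1 < α + 1 := by linarith
  calc (α + 1) * (besselSeries α u - besselSeries (α + 1) u)
      = ∑' k, (α + 1) * (besselCoeff α k - besselCoeff (α + 1) k) * u ^ k := by
        rw [besselSeries, besselSeries,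
          ← (summable_besselSeries hα u).tsum_sub (summable_besselSeries hα1 u), ← tsum_mul_left]
        congr with k
        ring
    _ = u * ∑' k, besselCoeff (α + 1) k * (k * u ^ (k - 1)) := by
        rw [← tsum_mul_left]
        congr with k
        rw [besselCoeff_sub_succ hα]
        rcases k with _ | k
        · simp
        · rw [Nat.add_sub_cancel, pow_succ]
          ring
    _ = -(u * besselSeries (α + 2) u) / (α + 2) := by
        rw [tsum_besselCoeff_mul_nat_mul_pow_sub_one hα1, show α + 1 + 1 = α + 2 by ring]
        ring

theorem hasDerivAt_besselJ (hα : -1 < α) (x : ℝ) :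
    HasDerivAt (besselJ α) (-(x / (2 * (α + 1))) * besselJ (α + 1) x) x := by
  have hsq : HasDerivAt (fun y : ℝ => (y / 2) ^ 2) (x / 2) x := by
    refine (((hasDerivAt_id' x).div_const 2).pow 2).congr_deriv ?_
    ring
  rw [funext (besselJ_eq_besselSeries hα), besselJ_eq_besselSeries (α := α + 1) (by linarith)]
  refine ((hasDerivAt_besselSeries hα _).comp x hsq).congr_deriv ?_
  have : α + 1 ≠ 0 := by linarith
  field_simp

theorem continuous_besselJ (hα : -1 < α) : Continuous (besselJ α) :=
  continuous_iff_continuousAt.2 fun x => (hasDerivAt_besselJ hα x).continuousAt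

theorem besselJ_sub_succ (hα : -1 < α) (x : ℝ) :
    4 * (α + 1) * (α + 2) * (besselJ α x - besselJ (α + 1) x) = -(x ^ 2 * besselJ (α + 2) x) := by
  have : α + 2 ≠ 0 := by linarith
  rw [besselJ_eq_besselSeries hα, besselJ_eq_besselSeries (by linarith),
    besselJ_eq_besselSeries (by linarith), mul_right_comm, mul_assoc _ (α + 1),
    besselSeries_sub_succ hα]
  field_simp
  ring

theorem hasDerivAt_besselJ_mul (hα : -1 < α) (c t : ℝ) :
    HasDerivAt (fun s => besselJ α (c * s))
      (-(c ^ 2 * t / (2 * (α + 1))) * besselJ (α + 1) (c * t)) t := by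
  refine ((hasDerivAt_besselJ hα (c * t)).comp t ((hasDerivAt_id t).const_mul c)).congr_deriv ?_
  ring

theorem hasDerivAt_rpow_mul_besselJ_succ (hα : -1 < α) (c : ℝ) {t : ℝ} (ht : 0 < t) :
    HasDerivAt (fun s => s ^ (2 * α + 2) * besselJ (α + 1) (c * s))
      ((2 * α + 2) * t ^ (2 * α + 1) * besselJ α (c * t)) t := by
  have hpow : HasDerivAt (fun s : ℝ => s ^ (2 * α + 2)) ((2 * α + 2) * t ^ (2 * α + 1)) t := by
    simpa only [show 2 * α + 2 - 1 = 2 * α + 1 by ring] using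
      Real.hasDerivAt_rpow_const (p := 2 * α + 2) (Or.inl ht.ne')
  have hsplit : t ^ (2 * α + 2) = t ^ (2 * α + 1) * t := by
    rw [show 2 * α + 2 = 2 * α + 1 + 1 by ring, Real.rpow_add ht, Real.rpow_one]
  have hrec := besselJ_sub_succ hα (c * t)
  refine (hpow.mul (hasDerivAt_besselJ_mul (by linarith : -1 < α + 1) c t)).congr_deriv ?_
  rw [hsplit, show α + 1 + 1 = α + 2 by ring]
  have : α + 2 ≠ 0 := by linarith
  field_simp
  linear_combination -hrec

theorem hasDerivAt_lommel_numerator (hα : -1 < α) (a b : ℝ) {t : ℝ} (ht : 0 < t) :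
    HasDerivAt (fun s => a ^ 2 * (s ^ (2 * α + 2) * besselJ (α + 1) (a * s) * besselJ α (b * s)) -
        b ^ 2 * (besselJ α (a * s) * (s ^ (2 * α + 2) * besselJ (α + 1) (b * s))))
      ((2 * α + 2) * (a ^ 2 - b ^ 2) * (besselJ α (a * t) * besselJ α (b * t) * t ^ (2 * α + 1)))
      t := by
  have hA := (hasDerivAt_rpow_mul_besselJ_succ hα a ht).mul (hasDerivAt_besselJ_mul hα b t)
  have hB := (hasDerivAt_besselJ_mul hα a t).mul (hasDerivAt_rpow_mul_besselJ_succ hα b ht)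
  refine ((hA.const_mul (a ^ 2)).sub (hB.const_mul (b ^ 2))).congr_deriv ?_
  have : α + 1 ≠ 0 := by linarith
  field_simp
  ring

end Bessel

open MeasureTheory Set in
/-- The Lommel-type integral for products of normalized Bessel functions. -/
theorem besselJ_lommel (α : ℝ) (hα : α > -1) (a b : ℝ) (ha : 0 ≤ a) (hb : 0 ≤ b)
    (hab : a ≠ b) (z : ℝ) (hz : 0 < z) :
    ∫ t in (0:ℝ)..z, besselJ α (a * t) * besselJ α (b * t) * t ^ (2 * α + 1) =
      z ^ (2 * α + 2) *
        (a ^ 2 * besselJ (α + 1) (a * z) * besselJ α (b * z) -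
          b ^ 2 * besselJ α (a * z) * besselJ (α + 1) (b * z)) /
        (2 * (α + 1) * (a ^ 2 - b ^ 2)) := by
  have hα1 : -1 < α + 1 := by linarith
  have hα1' : α + 1 ≠ 0 := by linarith
  have hab' : a ^ 2 - b ^ 2 ≠ 0 := sub_ne_zero.2 fun h => hab ((sq_eq_sq₀ ha hb).1 h)
  set F : ℝ → ℝ := fun s =>
    (a ^ 2 * (s ^ (2 * α + 2) * besselJ (α + 1) (a * s) * besselJ α (b * s)) -
      b ^ 2 * (besselJ α (a * s) * (s ^ (2 * α + 2) * besselJ (α + 1) (b * s)))) /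
    (2 * (α + 1) * (a ^ 2 - b ^ 2))
  have hF' : ∀ t ∈ Ioo 0 z,
      HasDerivAt F (besselJ α (a * t) * besselJ α (b * t) * t ^ (2 * α + 1)) t := by
    intro t ht
    refine ((hasDerivAt_lommel_numerator hα a b ht.1).div_const _).congr_deriv ?_
    field_simp
  have hFcont : ContinuousOn F (Icc 0 z) := by
    have := continuous_besselJ hα
    have := continuous_besselJ hα1
    have := Real.continuous_rpow_const (q := 2 * α + 2) (by linarith)
    simp only [F]
    fun_prop
  have hint : IntervalIntegrable
      (fun t => besselJ α (a * t) * besselJ α (b * t) * t ^ (2 * α + 1)) volume 0 z :=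
    (intervalIntegral.intervalIntegrable_rpow' (by linarith)).continuousOn_mul
      (by have := continuous_besselJ hα; fun_prop)
  rw [intervalIntegral.integral_eq_sub_of_hasDerivAt_of_le hz.le hFcont hF' hint]
  simp [F, Real.zero_rpow (by linarith : 2 * α + 2 ≠ 0)]
  ring
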